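/- Under the positivity, randomization and modularity assumptions, for a binary outcome Y the causal risk ratio in the experimental regime is identified as P_E(Y=1 | T=1) / P_E(Y=1 | T=0) = ( Σ_x P_O(Y=1 | T=1, X=x) P_O(X=x) ) / ( Σ_x P_O(Y=1 | T=0, X=x) P_O(X=x) ), provided the denominator Σ_x P_O(Y=1 | T=0, X=x) P_O(X=x) is positive. -/

import Mathlib

/-!
Under randomization and modularity every cell of the experimental law factors as
`P_E(y, t, x) = P_E(T = t) · P_O(Y = y | T = t, X = x) · P_O(X = x)`: where `P_O(X = x) > 0`,
positivity makes the observational conditional well defined and modularity transports it, and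
where `P_O(X = x) = 0` both sides vanish. Summing over `x` gives
`P_E(Y = 1, T = t) = P_E(T = t) · ∑ₓ P_O(Y = 1 | T = t, X = x) P_O(X = x)`, so
`P_E(Y = 1 | T = t)` is the adjusted sum, and the risk ratio is the ratio of the two sums.
-/

open scoped BigOperators

noncomputable section

variable {𝒳 : Type*} [Countable 𝒳]

def margX (P : Bool × Bool × 𝒳 → ℝ) (x : 𝒳) : ℝ :=
  ∑' y : Bool, ∑' t : Bool, P (y, t, x)

def margT (P : Bool × Bool × 𝒳 → ℝ) (t : Bool) : ℝ :=
  ∑' y : Bool, ∑' x : 𝒳, P (y, t, x)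

def margTX (P : Bool × Bool × 𝒳 → ℝ) (t : Bool) (x : 𝒳) : ℝ :=
  ∑' y : Bool, P (y, t, x)

def margYT (P : Bool × Bool × 𝒳 → ℝ) (y t : Bool) : ℝ :=
  ∑' x : 𝒳, P (y, t, x)

section Marginals

variable {α : Type*} {P : Bool × Bool × α → ℝ}

theorem margX_eq_margTX_false_add_margTX_true (P : Bool × Bool × α → ℝ) (x : α) :
    margX P x = margTX P false x + margTX P true x := by
  simp only [margX, margTX, tsum_bool]
  ring

theorem margX_nonneg (hP : ∀ z, 0 ≤ P z) (x : α) : 0 ≤ margX P x :=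
  tsum_nonneg fun _ => tsum_nonneg fun _ => hP _

theorem apply_le_margTX (hP : ∀ z, 0 ≤ P z) (y t : Bool) (x : α) : P (y, t, x) ≤ margTX P t x := by
  cases y <;> simp only [margTX, tsum_bool] <;> linarith [hP (false, t, x), hP (true, t, x)]

theorem margT_false_add_margT_true {s : ℝ} (hP : HasSum P s) :
    margT P false + margT P true = s := by
  have hfiber (y : Bool) : ∑' w : Bool × α, P (y, w) = ∑' (t : Bool) (x : α), P (y, t, x) :=
    (hP.summable.prod_factor y).tsum_prod
  have htotal : s = ∑' (y : Bool) (w : Bool × α), P (y, w) := hP.tsum_eq ▸ hP.summable.tsum_prod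
  simp only [htotal, hfiber, margT, tsum_bool]
  ring

theorem margTX_pos_of_propensity_mem_Ioo {x : α} (hx : 0 < margX P x)
    (hprop : 0 < margTX P true x / margX P x ∧ margTX P true x / margX P x < 1) (t : Bool) :
    0 < margTX P t x := by
  have htrue : 0 < margTX P true x := (div_pos_iff_of_pos_right hx).mp hprop.1
  have hlt : margTX P true x < margX P x := (div_lt_one hx).mp hprop.2
  cases t
  · linarith [margX_eq_margTX_false_add_margTX_true P x]
  · exact htrue

end Marginals

theorem apply_eq_margT_mul_div_margTX_mul_margX {α : Type*} {P_O P_E : Bool × Bool × α → ℝ}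
    (hE_nonneg : ∀ z, 0 ≤ P_E z)
    (hposO : ∀ x : α, 0 < margX P_O x →
      0 < margTX P_O true x / margX P_O x ∧ margTX P_O true x / margX P_O x < 1)
    (hrand : ∀ (t : Bool) (x : α), margTX P_E t x = margT P_E t * margX P_E x)
    (hmodY : ∀ (y t : Bool) (x : α),
      P_E (y, t, x) * margTX P_O t x = P_O (y, t, x) * margTX P_E t x)
    (hmodX : ∀ x : α, margX P_E x = margX P_O x) (y t : Bool) (x : α) :
    P_E (y, t, x) = margT P_E t * (P_O (y, t, x) / margTX P_O t x * margX P_O x) := by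
  rcases (margX_nonneg hE_nonneg x).eq_or_lt with hzero | hpos
  · have hcell : P_E (y, t, x) = 0 :=
      le_antisymm (by simpa [hrand, ← hzero] using apply_le_margTX hE_nonneg y t x) (hE_nonneg _)
    rw [hcell, ← hmodX, ← hzero, mul_zero, mul_zero]
  · rw [hmodX] at hpos
    have hTX := margTX_pos_of_propensity_mem_Ioo hpos (hposO x hpos) t
    have hmod := hmodY y t x
    rw [hrand, hmodX] at hmod
    field_simp
    linear_combination hmod

theorem causal_risk_ratio_identification_general
    (P_O P_E : Bool × Bool × 𝒳 → ℝ)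
    (hE_nonneg : ∀ z, 0 ≤ P_E z) (hE_sum : HasSum P_E 1)
    -- Positivity
    (hposE : 0 < margT P_E true ∧ margT P_E true < 1)
    (hposO : ∀ x : 𝒳, 0 < margX P_O x →
      0 < margTX P_O true x / margX P_O x ∧ margTX P_O true x / margX P_O x < 1)
    -- Randomization: `T ⫫ X` under `P_E`
    (hrand : ∀ (t : Bool) (x : 𝒳), margTX P_E t x = margT P_E t * margX P_E x)
    -- Modularity (cross-multiplied form): `P_E(Y=y | T=t, X=x) = P_O(Y=y | T=t, X=x)`
    (hmodY : ∀ (y t : Bool) (x : 𝒳),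
      P_E (y, t, x) * margTX P_O t x = P_O (y, t, x) * margTX P_E t x)
    -- Modularity: `P_E(X=x) = P_O(X=x)`
    (hmodX : ∀ x : 𝒳, margX P_E x = margX P_O x) :
    (margYT P_E true true / margT P_E true) / (margYT P_E true false / margT P_E false)
      = (∑' x : 𝒳, (P_O (true, true, x) / margTX P_O true x) * margX P_O x)
        / (∑' x : 𝒳, (P_O (true, false, x) / margTX P_O false x) * margX P_O x) := by
  obtain ⟨hT1, hT1_lt⟩ := hposE
  have hT0 : 0 < margT P_E false := by linarith [margT_false_add_margT_true hE_sum]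
  have hmargYT (t : Bool) : margYT P_E true t
      = margT P_E t * ∑' x, P_O (true, t, x) / margTX P_O t x * margX P_O x := by
    simp only [margYT,
      apply_eq_margT_mul_div_margTX_mul_margX hE_nonneg hposO hrand hmodY hmodX true t,
      tsum_mul_left]
  rw [hmargYT, hmargYT, mul_div_cancel_left₀ _ hT1.ne', mul_div_cancel_left₀ _ hT0.ne']

theorem causal_risk_ratio_identification
    (P_O P_E : Bool × Bool × 𝒳 → ℝ)
    (hO_nonneg : ∀ z, 0 ≤ P_O z) (hO_sum : HasSum P_O 1)
    (hE_nonneg : ∀ z, 0 ≤ P_E z) (hE_sum : HasSum P_E 1)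
    -- Positivity
    (hposE : 0 < margT P_E true ∧ margT P_E true < 1)
    (hposO : ∀ x : 𝒳, 0 < margX P_O x →
      0 < margTX P_O true x / margX P_O x ∧ margTX P_O true x / margX P_O x < 1)
    -- Randomization: `T ⫫ X` under `P_E`
    (hrand : ∀ (t : Bool) (x : 𝒳), margTX P_E t x = margT P_E t * margX P_E x)
    -- Modularity (cross-multiplied form): `P_E(Y=y | T=t, X=x) = P_O(Y=y | T=t, X=x)`
    (hmodY : ∀ (y t : Bool) (x : 𝒳),
      P_E (y, t, x) * margTX P_O t x = P_O (y, t, x) * margTX P_E t x)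
    -- Modularity: `P_E(X=x) = P_O(X=x)`
    (hmodX : ∀ x : 𝒳, margX P_E x = margX P_O x)
    -- the identified denominator is positive
    (hdenom : 0 < ∑' x : 𝒳, (P_O (true, false, x) / margTX P_O false x) * margX P_O x) :
    (margYT P_E true true / margT P_E true) / (margYT P_E true false / margT P_E false)
      = (∑' x : 𝒳, (P_O (true, true, x) / margTX P_O true x) * margX P_O x)
        / (∑' x : 𝒳, (P_O (true, false, x) / margTX P_O false x) * margX P_O x) :=
  causal_risk_ratio_identification_general P_O P_E hE_nonneg hE_sum hposE hposO hrand hmodY hmodX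

end
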